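/- For c > 0, β < 1, and β < α ≤ 2, the convex extended logistic loss f(θ) = ln_{2-α,c}(c + exp_{2-β,c}(θ)) is strictly convex on its domain {θ : θ < c^{β-1}/(1-β)}, with second derivative f''(θ) = [(α-β) + (2-β)·c/E(θ)]·E(θ)^{4-2β}/(c + E(θ))^{3-α} > 0, where E(θ) = exp_{2-β,c}(θ) = (c^{β-1} + (β-1)θ)^{1/(β-1)} > 0. -/

import Mathlib

/-! Writing `E` for the extended exponential, `E' = E^(2-β)` and `ln_{2-α,c}' (x) = x^(α-2)`, so
`f' = (c + E)^(α-2) E^(2-β)`. Differentiating once more and factoring out `E^(4-2β) / (c+E)^(3-α)`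
leaves `(α - 2) + (2 - β)(c + E)/E = (α - β) + (2 - β) c/E`, which is positive because `α > β`,
`β < 2` and `E > 0`. -/

open Filter Topology

/-- The extended logarithm `ln_{2-α,c}`. -/
noncomputable def extLog (α c x : ℝ) : ℝ :=
  if α = 1 then Real.log (x / c) else (x ^ (α - 1) - c ^ (α - 1)) / (α - 1)

theorem hasDerivAt_extLog {α c x : ℝ} (hc : c ≠ 0) (hx : 0 < x) :
    HasDerivAt (extLog α c) (x ^ (α - 2)) x := by
  by_cases hα : α = 1
  · have hlog : extLog α c = fun y => Real.log (y / c) := funext fun y => if_pos hα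
    rw [hlog, hα, show (1 : ℝ) - 2 = -1 by norm_num, Real.rpow_neg_one]
    refine (((hasDerivAt_id' x).div_const c).log (div_ne_zero hx.ne' hc)).congr_deriv ?_
    field_simp
  · have hpow : extLog α c = fun y => (y ^ (α - 1) - c ^ (α - 1)) / (α - 1) :=
      funext fun y => if_neg hα
    have hα' : α - 1 ≠ 0 := sub_ne_zero.2 hα
    rw [hpow]
    refine (((Real.hasDerivAt_rpow_const (p := α - 1) (Or.inl hx.ne')).sub_const
      (c ^ (α - 1))).div_const (α - 1)).congr_deriv ?_
    rw [show α - 1 - 1 = α - 2 by ring]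
    field_simp

theorem hasDerivAt_rpow_one_div_affine {a q θ : ℝ} (hq : q ≠ 0) (h : 0 < a + q * θ) :
    HasDerivAt (fun t => (a + q * t) ^ (1 / q)) (((a + q * θ) ^ (1 / q)) ^ (1 - q)) θ := by
  have haff : HasDerivAt (fun t => a + q * t) q θ := by
    simpa using ((hasDerivAt_id θ).const_mul q).const_add a
  refine (haff.rpow_const (p := 1 / q) (Or.inl h.ne')).congr_deriv ?_
  rw [← Real.rpow_mul h.le, show 1 / q * (1 - q) = 1 / q - 1 by field_simp]
  field_simp

theorem hasDerivAt_add_rpow_mul_rpow {E : ℝ → ℝ} {c p r θ : ℝ}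
    (hE : HasDerivAt E (E θ ^ r) θ) (he : 0 < E θ) (hce : 0 < c + E θ) :
    HasDerivAt (fun t => (c + E t) ^ p * E t ^ r)
      ((p + r + r * c / E θ) * E θ ^ (2 * r) / (c + E θ) ^ (1 - p)) θ := by
  refine (((hE.const_add c).rpow_const (p := p) (Or.inl hce.ne')).mul
    (hE.rpow_const (p := r) (Or.inl he.ne'))).congr_deriv ?_
  simp only [Real.rpow_sub hce, Real.rpow_sub he, Real.rpow_one, two_mul, Real.rpow_add he]
  have : (c + E θ) ^ p ≠ 0 := (Real.rpow_pos_of_pos hce p).ne'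
  field_simp
  ring

theorem iteratedDeriv_two_eq_of_hasDerivAt {f f' : ℝ → ℝ} {x f'' : ℝ}
    (hf : ∀ᶠ y in 𝓝 x, HasDerivAt f (f' y) y) (hf' : HasDerivAt f' f'' x) :
    iteratedDeriv 2 f x = f'' := by
  have hderiv : deriv f =ᶠ[𝓝 x] f' := hf.mono fun y hy => hy.deriv
  rw [iteratedDeriv_succ, iteratedDeriv_one, hderiv.deriv_eq, hf'.deriv]

theorem stmt_19_general (α β c : ℝ) (hc : 0 < c) (hβ : β < 1) (hαβ : β < α)
    (E f : ℝ → ℝ)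
    (hE : ∀ θ, E θ = (c ^ (β - 1) + (β - 1) * θ) ^ (1 / (β - 1)))
    (hf : ∀ θ, f θ = if α = 1 then Real.log ((c + E θ) / c)
      else ((c + E θ) ^ (α - 1) - c ^ (α - 1)) / (α - 1)) :
    StrictConvexOn ℝ (Set.Iio (c ^ (β - 1) / (1 - β))) f ∧
    ∀ θ < c ^ (β - 1) / (1 - β),
      0 < E θ ∧
      iteratedDeriv 2 f θ
        = ((α - β) + (2 - β) * c / E θ) * (E θ) ^ (4 - 2 * β) / (c + E θ) ^ (3 - α) ∧
      0 < ((α - β) + (2 - β) * c / E θ) * (E θ) ^ (4 - 2 * β) / (c + E θ) ^ (3 - α) := by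
  set D := c ^ (β - 1) / (1 - β)
  set f'' : ℝ → ℝ := fun θ =>
    ((α - β) + (2 - β) * c / E θ) * (E θ) ^ (4 - 2 * β) / (c + E θ) ^ (3 - α)
  have hbase : ∀ θ < D, 0 < c ^ (β - 1) + (β - 1) * θ := fun θ hθ => by
    rw [lt_div_iff₀ (sub_pos.2 hβ)] at hθ
    linarith
  have hEpos : ∀ θ < D, 0 < E θ := fun θ hθ => by
    rw [hE]
    exact Real.rpow_pos_of_pos (hbase θ hθ) _
  have hE' : ∀ θ < D, HasDerivAt E (E θ ^ (2 - β)) θ := fun θ hθ => by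
    rw [funext hE, show 2 - β = 1 - (β - 1) by ring]
    exact hasDerivAt_rpow_one_div_affine (sub_ne_zero.2 hβ.ne) (hbase θ hθ)
  have hf' : ∀ θ < D, HasDerivAt f ((c + E θ) ^ (α - 2) * E θ ^ (2 - β)) θ := fun θ hθ => by
    rw [show f = fun t => extLog α c (c + E t) from funext hf]
    exact (hasDerivAt_extLog hc.ne' (by linarith [hEpos θ hθ])).comp θ ((hE' θ hθ).const_add c)
  have hf''_pos : ∀ θ < D, 0 < f'' θ := fun θ hθ => by
    have he := hEpos θ hθ
    have hratio : 0 < (2 - β) * c / E θ := div_pos (mul_pos (by linarith) hc) he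
    exact div_pos (mul_pos (by linarith) (by positivity)) (by positivity)
  have hf''_eq : ∀ θ < D, iteratedDeriv 2 f θ = f'' θ := fun θ hθ => by
    have he := hEpos θ hθ
    refine iteratedDeriv_two_eq_of_hasDerivAt (eventually_lt_nhds hθ |>.mono hf') ?_
    refine (hasDerivAt_add_rpow_mul_rpow (p := α - 2) (hE' θ hθ) he
      (by linarith)).congr_deriv ?_
    rw [show α - 2 + (2 - β) = α - β by ring, show 2 * (2 - β) = 4 - 2 * β by ring,
      show 1 - (α - 2) = 3 - α by ring]
  refine ⟨strictConvexOn_of_deriv2_pos' (convex_Iio D)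
    (fun θ hθ => (hf' θ hθ).continuousAt.continuousWithinAt) fun θ hθ => ?_,
    fun θ hθ => ⟨hEpos θ hθ, hf''_eq θ hθ, hf''_pos θ hθ⟩⟩
  rw [← iteratedDeriv_eq_iterate, hf''_eq θ hθ]
  exact hf''_pos θ hθ

/-- For `c > 0`, `β < 1`, `β < α ≤ 2`, the convex extended logistic loss
`f(θ) = ln_{2-α,c}(c + exp_{2-β,c}(θ))`, where `exp_{2-β,c}(θ) = (c^{β-1}+(β-1)θ)^{1/(β-1)}`
and `ln_{2-α,c}(x) = (x^{α-1}-c^{α-1})/(α-1)` (`= log(x/c)` if `α = 1`), is strictly convex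
on `{θ | θ < c^{β-1}/(1-β)}`, where `E(θ) = exp_{2-β,c}(θ) > 0` and the second derivative
is `f''(θ) = [(α-β) + (2-β)c/E(θ)]·E(θ)^{4-2β}/(c+E(θ))^{3-α} > 0`. -/
theorem stmt_19 (α β c : ℝ) (hc : 0 < c) (hβ : β < 1) (hαβ : β < α) (hα : α ≤ 2)
    (E f : ℝ → ℝ)
    (hE : ∀ θ, E θ = (c ^ (β - 1) + (β - 1) * θ) ^ (1 / (β - 1)))
    (hf : ∀ θ, f θ = if α = 1 then Real.log ((c + E θ) / c)
      else ((c + E θ) ^ (α - 1) - c ^ (α - 1)) / (α - 1)) :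
    StrictConvexOn ℝ (Set.Iio (c ^ (β - 1) / (1 - β))) f ∧
    ∀ θ < c ^ (β - 1) / (1 - β),
      0 < E θ ∧
      iteratedDeriv 2 f θ
        = ((α - β) + (2 - β) * c / E θ) * (E θ) ^ (4 - 2 * β) / (c + E θ) ^ (3 - α) ∧
      0 < ((α - β) + (2 - β) * c / E θ) * (E θ) ^ (4 - 2 * β) / (c + E θ) ^ (3 - α) :=
  stmt_19_general α β c hc hβ hαβ E f hE hf
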